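/- Every element α ∈ F'_n which is multilinear in x_1,…,x_n and alternating under permutations of x_1,…,x_n (i.e. α ∈ H'_n) satisfies δα = 0 in F'_{n+1}. -/

import Mathlib

/-!
The coface `δ_j` (`1 ≤ j ≤ n`) substitutes `x_j + x_{j+1}` for `x_j`; setting `x_{j+1} = 0`,
resp. `x_j = 0`, afterwards turns it into the inclusion `τ_j`, resp. `τ_{j-1}`, where `τ_p` skips
the generator `x_{p+1}`. If `α` is linear in `x_j`, then rescaling both `x_j` and `x_{j+1}` by `t`
multiplies `δ_j α` by `t`. The rescalings are polynomial in `t`, i.e. they grade `F'_{n+1}`, so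
`δ_j α` has bidegree `(1,0) + (0,1)` in `(x_j, x_{j+1})` and is therefore the sum of its two
specialisations: `F(δ_j) α = F(τ_j) α + F(τ_{j-1}) α`. Since `δ_0 = τ_0` and `δ_{n+1} = τ_n`,
the alternating sum `δ α` telescopes to `0`.
-/

open TensorProduct

/-- The subspace of `L ⊗[k] L` spanned by the elements `a⊗b − b⊗a` and
`a⊗[b,c] − [a,b]⊗c`. -/
def Frel (k L : Type*) [Field k] [LieRing L] [LieAlgebra k L] :
    Submodule k (L ⊗[k] L) :=
  Submodule.span k
    ({x | ∃ a b : L, x = a ⊗ₜ[k] b - b ⊗ₜ[k] a} ∪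
     {x | ∃ a b c : L, x = a ⊗ₜ[k] ⁅b, c⁆ - ⁅a, b⁆ ⊗ₜ[k] c})

/-- `F(L)`, the quotient of `L ⊗[k] L` by the relations. -/
abbrev FF (k L : Type*) [Field k] [LieRing L] [LieAlgebra k L] :=
  (L ⊗[k] L) ⧸ Frel k L

/-- `⟨a, b⟩`, the class of `a ⊗ b` in `F(L)`. -/
noncomputable def pair {k L : Type*} [Field k] [LieRing L] [LieAlgebra k L] (a b : L) :
    FF k L :=
  Submodule.Quotient.mk (a ⊗ₜ[k] b)
theorem Frel_map_le {k L L' : Type*} [Field k] [LieRing L] [LieAlgebra k L]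
    [LieRing L'] [LieAlgebra k L'] (f : L →ₗ⁅k⁆ L') :
    (Frel k L).map (TensorProduct.map f.toLinearMap f.toLinearMap) ≤ Frel k L' := by
  rw [Frel, Submodule.map_span, Submodule.span_le]
  rintro _ ⟨x, hx, rfl⟩
  apply Submodule.subset_span
  rcases hx with ⟨a, b, rfl⟩ | ⟨a, b, c, rfl⟩
  · exact Or.inl ⟨f a, f b, by simp⟩
  · exact Or.inr ⟨f a, f b, f c, by simp⟩

/-- The linear map `F(f) : F(L) → F(L')` induced by a Lie algebra homomorphism `f`;
it satisfies `F(f)⟨a,b⟩ = ⟨f a, f b⟩`. -/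
noncomputable def Fmap {k L L' : Type*} [Field k] [LieRing L] [LieAlgebra k L]
    [LieRing L'] [LieAlgebra k L'] (f : L →ₗ⁅k⁆ L') : FF k L →ₗ[k] FF k L' :=
  Submodule.mapQ (Frel k L) (Frel k L') (TensorProduct.map f.toLinearMap f.toLinearMap)
    (Submodule.map_le_iff_le_comap.mp (Frel_map_le f))

theorem Fmap_pair {k L L' : Type*} [Field k] [LieRing L] [LieAlgebra k L]
    [LieRing L'] [LieAlgebra k L'] (f : L →ₗ⁅k⁆ L') (a b : L) :
    Fmap f (pair a b) = pair (f a) (f b) := by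
  simp [Fmap, pair, Submodule.mapQ_apply]

/-- `L_n`, the free Lie algebra on generators `x_1, …, x_n` (the generator `j : Fin n`
corresponds to `x_{j+1}`). -/
abbrev Ln (k : Type*) [Field k] (n : ℕ) := FreeLieAlgebra k (Fin n)

/-- The value of the coface map `δ_i : L_n → L_{n+1}` on the generator `x_{j+1}`:
`x_m ↦ x_m` for `m < i`, `x_i ↦ x_i + x_{i+1}`, and `x_m ↦ x_{m+1}` for `m > i`
(with `m = j+1`, 1-based indexing). -/
noncomputable def cofaceGen (k : Type*) [Field k] (n : ℕ) (i : Fin (n + 2)) (j : Fin n) :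
    Ln k (n + 1) :=
  if (j : ℕ) + 1 < (i : ℕ) then FreeLieAlgebra.of k j.castSucc
  else if (j : ℕ) + 1 = (i : ℕ) then
    FreeLieAlgebra.of k j.castSucc + FreeLieAlgebra.of k j.succ
  else FreeLieAlgebra.of k j.succ

/-- The coface map `δ_i : L_n → L_{n+1}` as a Lie algebra homomorphism. -/
noncomputable def coface (k : Type*) [Field k] (n : ℕ) (i : Fin (n + 2)) :
    Ln k n →ₗ⁅k⁆ Ln k (n + 1) :=
  FreeLieAlgebra.lift k (cofaceGen k n i)

/-- The cosimplicial differential `δ = Σ_{i=0}^{n+1} (−1)^i F(δ_i) : F_n → F_{n+1}`. -/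
noncomputable def cosimp (k : Type*) [Field k] (n : ℕ) :
    FF k (Ln k n) →ₗ[k] FF k (Ln k (n + 1)) :=
  ∑ i : Fin (n + 2), ((-1 : k) ^ (i : ℕ)) • Fmap (coface k n i)

/-- `L'_n`, the free Lie algebra on the `n+1` generators `y, x_1, …, x_n`
(the generator `none` is `y`, and `some j : Option (Fin n)` corresponds to `x_{j+1}`). -/
abbrev Lp (k : Type*) [Field k] (n : ℕ) := FreeLieAlgebra k (Option (Fin n))

/-- The value of the coface map `δ_i : L'_n → L'_{n+1}` on generators: it fixes `y` and
acts on the `x`-generators by `x_m ↦ x_m` for `m < i`, `x_i ↦ x_i + x_{i+1}`, and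
`x_m ↦ x_{m+1}` for `m > i` (1-based indexing, `m = j+1`). -/
noncomputable def cofaceGenP (k : Type*) [Field k] (n : ℕ) (i : Fin (n + 2)) :
    Option (Fin n) → Lp k (n + 1)
  | none => FreeLieAlgebra.of k (none : Option (Fin (n + 1)))
  | some j =>
    if (j : ℕ) + 1 < (i : ℕ) then FreeLieAlgebra.of k (some j.castSucc)
    else if (j : ℕ) + 1 = (i : ℕ) then
      FreeLieAlgebra.of k (some j.castSucc) + FreeLieAlgebra.of k (some j.succ)
    else FreeLieAlgebra.of k (some j.succ)

/-- The coface map `δ_i : L'_n → L'_{n+1}` as a Lie algebra homomorphism. -/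
noncomputable def cofaceP (k : Type*) [Field k] (n : ℕ) (i : Fin (n + 2)) :
    Lp k n →ₗ⁅k⁆ Lp k (n + 1) :=
  FreeLieAlgebra.lift k (cofaceGenP k n i)

/-- The cosimplicial differential `δ = Σ_{i=0}^{n+1} (−1)^i F(δ_i) : F'_n → F'_{n+1}`. -/
noncomputable def cosimpP (k : Type*) [Field k] (n : ℕ) :
    FF k (Lp k n) →ₗ[k] FF k (Lp k (n + 1)) :=
  ∑ i : Fin (n + 2), ((-1 : k) ^ (i : ℕ)) • Fmap (cofaceP k n i)

/-- The Lie algebra endomorphism of `L'_n` fixing `y`, rescaling the generator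
`x_{i+1}` by `t` and fixing the other `x`-generators. -/
noncomputable def scaleHomP (k : Type*) [Field k] (n : ℕ) (i : Fin n) (t : k) :
    Lp k n →ₗ⁅k⁆ Lp k n :=
  FreeLieAlgebra.lift k
    (fun o => match o with
      | none => FreeLieAlgebra.of k (none : Option (Fin n))
      | some j =>
        if j = i then t • FreeLieAlgebra.of k (some j) else FreeLieAlgebra.of k (some j))

/-- The Lie algebra endomorphism of `L'_n` fixing `y` and permuting the `x`-generators,
`x_i ↦ x_{π(i)}`. -/
noncomputable def permHomP (k : Type*) [Field k] (n : ℕ) (π : Equiv.Perm (Fin n)) :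
    Lp k n →ₗ⁅k⁆ Lp k n :=
  FreeLieAlgebra.lift k (fun o => FreeLieAlgebra.of k (o.map π))

/-- `H'_n ⊆ F'_n`: the subspace of elements that are multilinear in the `x`-generators
and alternating under permutations of the `x`-generators. -/
noncomputable def HsubP (k : Type*) [Field k] (n : ℕ) : Submodule k (FF k (Lp k n)) :=
  (⨅ i : Fin n, ⨅ t : k,
      LinearMap.ker (Fmap (scaleHomP k n i t)
        - t • (LinearMap.id : FF k (Lp k n) →ₗ[k] FF k (Lp k n)))) ⊓
  (⨅ π : Equiv.Perm (Fin n),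
      LinearMap.ker (Fmap (permHomP k n π)
        - ((Equiv.Perm.sign π : ℤ) : k)
            • (LinearMap.id : FF k (Lp k n) →ₗ[k] FF k (Lp k n))))

namespace PolynomialModule

section CommRing
variable {R V W : Type*} [CommRing R] [AddCommGroup V] [Module R V] [AddCommGroup W] [Module R W]

theorem coeff_smul (c : R) (p : PolynomialModule R V) (d : ℕ) :
    (c • p).coeff d = c • p.coeff d :=
  rfl

theorem coeff_map (f : V →ₗ[R] W) (p : PolynomialModule R V) (d : ℕ) :
    (map R f p).coeff d = f (p.coeff d) := by
  simp [map]

theorem eval_comp_C_mul_X (s t : R) (p : PolynomialModule R V) :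
    eval t (comp (Polynomial.C s * Polynomial.X) p) = eval (s * t) p := by
  rw [comp_eval, Polynomial.eval_mul, Polynomial.eval_C, Polynomial.eval_X]

theorem coeff_comp_C_mul_X (s : R) (p : PolynomialModule R V) (d : ℕ) :
    (comp (Polynomial.C s * Polynomial.X) p).coeff d = s ^ d • p.coeff d := by
  induction p using induction_linear with
  | zero => simp
  | add p q hp hq =>
    rw [map_add, coeff_add, Finsupp.add_apply, hp, hq, coeff_add, Finsupp.add_apply, smul_add]
  | single i v =>
    rw [comp_single, mul_pow, ← Polynomial.C_pow, ← Polynomial.monomial_one_right_eq_X_pow,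
      Polynomial.C_mul_monomial, mul_one, monomial_smul_single, add_zero, coeff_single,
      coeff_single, Finsupp.single_apply, Finsupp.single_apply]
    split_ifs with h <;> simp [h]

theorem eval_eq_coeff_zero_add_smul_coeff_one {p : PolynomialModule R V}
    (hp : ∀ d, 2 ≤ d → p.coeff d = 0) (t : R) : eval t p = p.coeff 0 + t • p.coeff 1 := by
  rw [eval_apply, Finsupp.sum_of_support_subset p.coeff (s := {0, 1}) (fun d hd => by
    by_contra h
    simp only [Finset.mem_insert, Finset.mem_singleton, not_or] at h
    exact Finsupp.mem_support_iff.mp hd (hp d (by omega))) _ fun _ _ => smul_zero _]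
  simp

end CommRing

variable {k V : Type*} [Field k] [Infinite k] [AddCommGroup V] [Module k V]

theorem eq_zero_of_forall_eval_eq_zero {p : PolynomialModule k V} (h : ∀ t : k, eval t p = 0) :
    p = 0 := by
  rw [← coeff_eq_zero]
  ext d
  rw [Finsupp.zero_apply, ← Module.forall_dual_apply_eq_zero_iff k]
  intro φ
  have hφ : equivPolynomial (map k φ p) = 0 := Polynomial.funext fun t => by
    have h' := eval_map k φ p t
    rw [Algebra.algebraMap_self, RingHom.id_apply] at h'
    rw [← Polynomial.coe_aeval_eq_eval, aeval_equivPolynomial]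
    simp [h', h]
  simpa [map, equivPolynomial] using congrArg (Polynomial.coeff · d) hφ

theorem eq_of_forall_eval_eq {p q : PolynomialModule k V} (h : ∀ t : k, eval t p = eval t q) :
    p = q :=
  sub_eq_zero.mp (eq_zero_of_forall_eval_eq_zero fun t => by rw [map_sub, h, sub_self])

end PolynomialModule

theorem eq_one_of_forall_pow_eq_self {R : Type*} [CommRing R] [IsDomain R] [Infinite R] {m : ℕ}
    (h : ∀ c : R, c ^ m = c) : m = 1 := by
  have hX : (Polynomial.X ^ m : Polynomial R) = Polynomial.X := Polynomial.funext fun c => by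
    simp [h]
  simpa using congrArg Polynomial.natDegree hX

section PolynomialMaps
open PolynomialModule

variable {R V W U : Type*} [CommRing R] [AddCommGroup V] [Module R V] [AddCommGroup W]
  [Module R W] [AddCommGroup U] [Module R U]

variable (R V) in
noncomputable def polynomialMaps : Submodule R (R → V) :=
  LinearMap.range (LinearMap.pi fun t : R => eval (M := V) t)

theorem mem_polynomialMaps {f : R → V} :
    f ∈ polynomialMaps R V ↔ ∃ p : PolynomialModule R V, ∀ t, eval t p = f t := by
  simp [polynomialMaps, funext_iff]

theorem monomial_mem_polynomialMaps (d : ℕ) (v : V) :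
    (fun t : R => t ^ d • v) ∈ polynomialMaps R V :=
  mem_polynomialMaps.mpr ⟨single R d v, fun t => eval_single t d v⟩

theorem LinearMap.apply_apply_mem_polynomialMaps (B : V →ₗ[R] W →ₗ[R] U) {f : R → V}
    {g : R → W} (hf : f ∈ polynomialMaps R V) (hg : g ∈ polynomialMaps R W) :
    (fun t => B (f t) (g t)) ∈ polynomialMaps R U := by
  suffices h : ∀ p q, (fun t => B (eval t p) (eval t q)) ∈ polynomialMaps R U by
    obtain ⟨p, hp⟩ := mem_polynomialMaps.mp hf
    obtain ⟨q, hq⟩ := mem_polynomialMaps.mp hg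
    simpa only [hp, hq] using h p q
  intro p q
  induction p using induction_linear with
  | zero => simp only [map_zero, LinearMap.zero_apply]; exact zero_mem _
  | add p p' hp hp' => simp only [map_add, LinearMap.add_apply]; exact add_mem hp hp'
  | single i v =>
    induction q using induction_linear with
    | zero => simp only [map_zero]; exact zero_mem _
    | add q q' hq hq' => simp only [map_add]; exact add_mem hq hq'
    | single j w =>
      simpa only [eval_single, LinearMap.map_smul, LinearMap.smul_apply, smul_smul, ← pow_add,
        mul_comm] using monomial_mem_polynomialMaps (i + j) (B v w)

end PolynomialMaps

/-- Over an infinite field, such an action is the same as an `ℕ`-grading of `V`: the degree `d`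
part is where `t` acts by `t ^ d`. -/
structure PolynomialAction (R V : Type*) [CommRing R] [AddCommGroup V] [Module R V] where
  toMonoidHom : R →* Module.End R V
  mem_polynomialMaps' : ∀ v, (fun t => toMonoidHom t v) ∈ polynomialMaps R V

namespace PolynomialAction
open PolynomialModule

section CommRing
variable {R V : Type*} [CommRing R] [AddCommGroup V] [Module R V]

instance : CoeFun (PolynomialAction R V) fun _ => R → Module.End R V := ⟨fun P => P.toMonoidHom⟩

variable (P : PolynomialAction R V)

theorem apply_one (v : V) : P 1 v = v := by
  rw [map_one, Module.End.one_apply]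

theorem apply_mul (s t : R) (v : V) : P (s * t) v = P s (P t v) := by
  rw [map_mul, Module.End.mul_apply]

end CommRing

variable {k V : Type*} [Field k] [Infinite k] [AddCommGroup V] [Module k V]
  (P Q : PolynomialAction k V)

noncomputable def coeffs : V →ₗ[k] PolynomialModule k V where
  toFun v := (mem_polynomialMaps.mp (P.mem_polynomialMaps' v)).choose
  map_add' v v' := eq_of_forall_eval_eq fun t => by
    have h w := (mem_polynomialMaps.mp (P.mem_polynomialMaps' w)).choose_spec t
    rw [h, map_add, map_add, h, h]
  map_smul' c v := eq_of_forall_eval_eq fun t => by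
    have h w := (mem_polynomialMaps.mp (P.mem_polynomialMaps' w)).choose_spec t
    rw [h, LinearMap.map_smul, RingHom.id_apply, LinearMap.map_smul, h]

theorem eval_coeffs (t : k) (v : V) : eval t (P.coeffs v) = P t v :=
  (mem_polynomialMaps.mp (P.mem_polynomialMaps' v)).choose_spec t

theorem coeffs_apply_of_commute {T : Module.End k V} (hT : ∀ t, Commute (P t) T) (v : V) :
    P.coeffs (T v) = map k T (P.coeffs v) :=
  eq_of_forall_eval_eq fun t => by
    rw [eval_coeffs, eval_map', eval_coeffs, ← Module.End.mul_apply, (hT t).eq,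
      Module.End.mul_apply]

theorem coeffs_apply (s : k) (v : V) :
    P.coeffs (P s v) = comp (Polynomial.C s * Polynomial.X) (P.coeffs v) :=
  eq_of_forall_eval_eq fun t => by
    rw [eval_coeffs, eval_comp_C_mul_X, eval_coeffs, ← apply_mul, mul_comm]

theorem eq_add_of_apply_apply_eq_smul (hPQ : ∀ s t, Commute (P s) (Q t)) {w : V}
    (hw : ∀ c, P c (Q c w) = c • w) : w = P 0 w + Q 0 w := by
  -- `u b` is the `Q`-degree `b` part of `w`; its `P`-degree `a` part vanishes unless `a + b = 1`.
  set u : ℕ → V := fun b => (Q.coeffs w).coeff b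
  have hu : ∀ b c, c ^ b • P c (u b) = c • u b := fun b c => by
    have h := congrArg (fun v => (Q.coeffs v).coeff b) (hw c)
    simpa only [Q.coeffs_apply_of_commute fun t => (hPQ c t).symm, PolynomialModule.coeff_map,
      coeffs_apply, coeff_comp_C_mul_X, _root_.map_smul, PolynomialModule.coeff_smul] using h
  have hx : ∀ a b, a + b ≠ 1 → (P.coeffs (u b)).coeff a = 0 := fun a b hab => by
    by_contra hne
    refine hab (eq_one_of_forall_pow_eq_self fun c => smul_left_injective k hne ?_)
    have h := congrArg (fun v => (P.coeffs v).coeff a) (hu b c)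
    simp only [_root_.map_smul, coeffs_apply, PolynomialModule.coeff_smul,
      coeff_comp_C_mul_X] at h
    show c ^ (a + b) • _ = c • _
    rwa [pow_add, mul_smul, smul_comm]
  have hPu : ∀ b t, P t (u b) = (P.coeffs (u b)).coeff 0 + t • (P.coeffs (u b)).coeff 1 :=
    fun b t => by
      rw [← eval_coeffs]
      exact eval_eq_coeff_zero_add_smul_coeff_one (fun a ha => hx a b (by omega)) t
  have hQw : ∀ t, Q t w = u 0 + t • u 1 := fun t => by
    rw [← eval_coeffs]
    refine eval_eq_coeff_zero_add_smul_coeff_one (fun b hb => ?_) t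
    change u b = 0
    rw [← P.apply_one (u b), hPu, hx 0 b (by omega), hx 1 b (by omega), smul_zero, add_zero]
  have hw1 : w = u 0 + u 1 := by rw [← Q.apply_one w, hQw, one_smul]
  have hPu0 : P 0 (u 0) = 0 := by simp [hPu, hx 0 0 (by omega)]
  have hPu1 : P 0 (u 1) = u 1 := by
    rw [hPu, zero_smul, add_zero]
    conv_rhs => rw [← P.apply_one (u 1), hPu, hx 1 1 (by omega), smul_zero, add_zero]
  rw [hQw, zero_smul, add_zero]
  nth_rw 2 [hw1]
  rw [map_add, hPu0, hPu1, zero_add, add_comm, ← hw1]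

end PolynomialAction

section Functoriality
variable {k L L' L'' : Type*} [Field k] [LieRing L] [LieAlgebra k L] [LieRing L']
  [LieAlgebra k L'] [LieRing L''] [LieAlgebra k L'']

theorem Fmap_id : Fmap (LieHom.id : L →ₗ⁅k⁆ L) = LinearMap.id := by
  ext a b
  simp [Fmap]

theorem Fmap_comp (g : L' →ₗ⁅k⁆ L'') (f : L →ₗ⁅k⁆ L') :
    Fmap (g.comp f) = (Fmap g).comp (Fmap f) := by
  ext a b
  simp [Fmap]

theorem Fmap_mem_polynomialMaps (f : k → L →ₗ⁅k⁆ L')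
    (hf : ∀ v, (fun t => f t v) ∈ polynomialMaps k L') (α : FF k L) :
    (fun t => Fmap (f t) α) ∈ polynomialMaps k (FF k L') := by
  obtain ⟨z, rfl⟩ := Submodule.Quotient.mk_surjective _ α
  induction z using TensorProduct.induction_on with
  | zero => simp only [Submodule.Quotient.mk_zero, map_zero]; exact zero_mem _
  | tmul a b =>
    change (fun t => Fmap (f t) (pair a b)) ∈ _
    simp only [Fmap_pair]
    exact ((TensorProduct.mk k L' L').compr₂ (Frel k L').mkQ).apply_apply_mem_polynomialMaps
      (hf a) (hf b)
  | add x y hx hy => simp only [Submodule.Quotient.mk_add, map_add]; exact add_mem hx hy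

theorem FreeLieAlgebra.apply_mem_polynomialMaps {X : Type*}
    (f : k → FreeLieAlgebra k X →ₗ⁅k⁆ L)
    (hf : ∀ x, (fun t => f t (FreeLieAlgebra.of k x)) ∈ polynomialMaps k L)
    (v : FreeLieAlgebra k X) : (fun t => f t v) ∈ polynomialMaps k L := by
  let S : LieSubalgebra k (FreeLieAlgebra k X) :=
    { carrier := {v | (fun t => f t v) ∈ polynomialMaps k L}
      add_mem' := fun ha hb => by
        simp only [Set.mem_ofPred_eq, map_add]; exact add_mem ha hb
      zero_mem' := by simp only [Set.mem_ofPred_eq, map_zero]; exact zero_mem _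
      smul_mem' := fun c v hv => by
        simp only [Set.mem_ofPred_eq, map_smul]; exact Submodule.smul_mem _ c hv
      lie_mem' := fun ha hb => by
        simp only [Set.mem_ofPred_eq, LieHom.map_lie]
        exact (LinearMap.mk₂ k (fun x y : L => ⁅x, y⁆) add_lie smul_lie lie_add
          lie_smul).apply_apply_mem_polynomialMaps ha hb }
  let g : FreeLieAlgebra k X →ₗ⁅k⁆ S :=
    FreeLieAlgebra.lift k fun x => ⟨FreeLieAlgebra.of k x, hf x⟩
  have hg : S.incl.comp g = LieHom.id := FreeLieAlgebra.hom_ext fun x => by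
    simp [g, FreeLieAlgebra.lift_of_apply]
  have hv : (g v : FreeLieAlgebra k X) = v := LieHom.congr_fun hg v
  exact hv ▸ (g v).2

end Functoriality

/-- `τ_p : L'_n → L'_{n+1}`, the inclusion fixing `y` and skipping the generator `some p`
(that is, `x_{p+1}`). -/
noncomputable def skipHom (k : Type*) [Field k] (n : ℕ) (p : Fin (n + 1)) :
    Lp k n →ₗ⁅k⁆ Lp k (n + 1) :=
  FreeLieAlgebra.lift k fun o => FreeLieAlgebra.of k (o.map p.succAbove)

section Generators
variable {k : Type*} [Field k]

@[simp]
theorem scaleHomP_of_none (m : ℕ) (i : Fin m) (t : k) :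
    scaleHomP k m i t (FreeLieAlgebra.of k none) = FreeLieAlgebra.of k none :=
  FreeLieAlgebra.lift_of_apply _ _

@[simp]
theorem scaleHomP_of_some (m : ℕ) (i j : Fin m) (t : k) :
    scaleHomP k m i t (FreeLieAlgebra.of k (some j)) =
      if j = i then t • FreeLieAlgebra.of k (some j) else FreeLieAlgebra.of k (some j) :=
  FreeLieAlgebra.lift_of_apply _ _

@[simp]
theorem cofaceP_of (n : ℕ) (i : Fin (n + 2)) (o : Option (Fin n)) :
    cofaceP k n i (FreeLieAlgebra.of k o) = cofaceGenP k n i o :=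
  FreeLieAlgebra.lift_of_apply _ _

@[simp]
theorem skipHom_of (n : ℕ) (p : Fin (n + 1)) (o : Option (Fin n)) :
    skipHom k n p (FreeLieAlgebra.of k o) = FreeLieAlgebra.of k (o.map p.succAbove) :=
  FreeLieAlgebra.lift_of_apply _ _

theorem scaleHomP_one (m : ℕ) (i : Fin m) : scaleHomP k m i 1 = LieHom.id := by
  apply FreeLieAlgebra.hom_ext
  rintro (_ | j) <;> simp

theorem scaleHomP_mul (m : ℕ) (i : Fin m) (s t : k) :
    scaleHomP k m i (s * t) = (scaleHomP k m i s).comp (scaleHomP k m i t) := by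
  apply FreeLieAlgebra.hom_ext
  rintro (_ | j)
  · simp
  · by_cases h : j = i <;> simp [h, mul_smul, smul_comm s t]

theorem scaleHomP_comm (m : ℕ) (i i' : Fin m) (s t : k) :
    (scaleHomP k m i s).comp (scaleHomP k m i' t) =
      (scaleHomP k m i' t).comp (scaleHomP k m i s) := by
  apply FreeLieAlgebra.hom_ext
  rintro (_ | j)
  · simp
  · simp only [LieHom.comp_apply, scaleHomP_of_some]
    split_ifs <;> simp_all [smul_comm s t]

theorem scaleHomP_of_mem_polynomialMaps (m : ℕ) (i : Fin m) (o : Option (Fin m)) :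
    (fun t => scaleHomP k m i t (FreeLieAlgebra.of k o)) ∈ polynomialMaps k (Lp k m) := by
  rcases o with _ | j
  · simpa using monomial_mem_polynomialMaps (R := k) 0 (FreeLieAlgebra.of k (none : Option (Fin m)))
  · by_cases h : j = i
    · simpa [h] using monomial_mem_polynomialMaps (R := k) 1 (FreeLieAlgebra.of k (some i))
    · simpa [h] using monomial_mem_polynomialMaps (R := k) 0 (FreeLieAlgebra.of k (some j))

theorem cofaceP_zero (n : ℕ) : cofaceP k n 0 = skipHom k n 0 := by
  apply FreeLieAlgebra.hom_ext
  rintro (_ | m) <;> simp [cofaceGenP]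

theorem cofaceP_last (n : ℕ) : cofaceP k n (Fin.last (n + 1)) = skipHom k n (Fin.last n) := by
  apply FreeLieAlgebra.hom_ext
  rintro (_ | m) <;> simp [cofaceGenP]

theorem scaleHomP_comp_cofaceP_succ (n : ℕ) (j : Fin n) :
    (scaleHomP k (n + 1) j.succ 0).comp (cofaceP k n j.castSucc.succ) = skipHom k n j.succ := by
  apply FreeLieAlgebra.hom_ext
  rintro (_ | m)
  · simp [cofaceGenP]
  · simp only [LieHom.comp_apply, cofaceP_of, skipHom_of, cofaceGenP, Option.map_some]
    split_ifs <;> simp only [Fin.val_succ, Fin.val_castSucc] at * <;>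
      simp [Fin.succAbove, Fin.ext_iff, Fin.lt_def, -Fin.val_fin_lt] <;> split_ifs <;>
      first | omega | simp

theorem scaleHomP_comp_cofaceP_castSucc (n : ℕ) (j : Fin n) :
    (scaleHomP k (n + 1) j.castSucc 0).comp (cofaceP k n j.castSucc.succ) =
      skipHom k n j.castSucc := by
  apply FreeLieAlgebra.hom_ext
  rintro (_ | m)
  · simp [cofaceGenP]
  · simp only [LieHom.comp_apply, cofaceP_of, skipHom_of, cofaceGenP, Option.map_some]
    split_ifs <;> simp only [Fin.val_succ, Fin.val_castSucc] at * <;>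
      simp [Fin.succAbove, Fin.ext_iff, Fin.lt_def, -Fin.val_fin_lt] <;> split_ifs <;>
      first | omega | simp

theorem scaleHomP_comp_scaleHomP_comp_cofaceP (n : ℕ) (j : Fin n) (t : k) :
    ((scaleHomP k (n + 1) j.castSucc t).comp (scaleHomP k (n + 1) j.succ t)).comp
      (cofaceP k n j.castSucc.succ) = (cofaceP k n j.castSucc.succ).comp (scaleHomP k n j t) := by
  apply FreeLieAlgebra.hom_ext
  rintro (_ | m)
  · simp [cofaceGenP]
  · rcases eq_or_ne m j with rfl | h
    · simp [cofaceGenP, Fin.ext_iff]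
    · have h' : (m : ℕ) ≠ j := Fin.val_ne_of_ne h
      simp only [LieHom.comp_apply, cofaceP_of, scaleHomP_of_some, if_neg h, cofaceGenP]
      split_ifs <;> simp only [Fin.val_succ, Fin.val_castSucc] at * <;> simp [Fin.ext_iff] <;>
        split_ifs <;> simp [Fin.ext_iff, h'] <;> omega

end Generators

noncomputable def scaleAction (k : Type*) [Field k] (n : ℕ) (i : Fin n) :
    PolynomialAction k (FF k (Lp k n)) where
  toMonoidHom :=
    { toFun := fun t => Fmap (scaleHomP k n i t)
      map_one' := by rw [scaleHomP_one, Fmap_id]; rfl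
      map_mul' := fun s t => by rw [scaleHomP_mul, Fmap_comp]; rfl }
  mem_polynomialMaps' := Fmap_mem_polynomialMaps _
    (FreeLieAlgebra.apply_mem_polynomialMaps _ (scaleHomP_of_mem_polynomialMaps n i))

section Coface
variable {k : Type*} [Field k]

theorem scaleAction_apply (n : ℕ) (i : Fin n) (t : k) (α : FF k (Lp k n)) :
    scaleAction k n i t α = Fmap (scaleHomP k n i t) α :=
  rfl

theorem scaleAction_commute (n : ℕ) (i i' : Fin n) (s t : k) :
    Commute (scaleAction k n i s) (scaleAction k n i' t) := by
  refine LinearMap.ext fun α => ?_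
  change Fmap _ (Fmap _ α) = Fmap _ (Fmap _ α)
  rw [← LinearMap.comp_apply, ← Fmap_comp, scaleHomP_comm, Fmap_comp, LinearMap.comp_apply]

theorem Fmap_cofaceP_castSucc_succ [Infinite k] (n : ℕ) (j : Fin n) {α : FF k (Lp k n)}
    (hα : ∀ t, Fmap (scaleHomP k n j t) α = t • α) :
    Fmap (cofaceP k n j.castSucc.succ) α =
      Fmap (skipHom k n j.castSucc) α + Fmap (skipHom k n j.succ) α := by
  have hw := (scaleAction k (n + 1) j.castSucc).eq_add_of_apply_apply_eq_smul
    (scaleAction k (n + 1) j.succ) (scaleAction_commute (n + 1) _ _)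
    (w := Fmap (cofaceP k n j.castSucc.succ) α) fun c => by
      simp only [scaleAction_apply]
      rw [← LinearMap.comp_apply, ← Fmap_comp, ← LinearMap.comp_apply, ← Fmap_comp,
        scaleHomP_comp_scaleHomP_comp_cofaceP, Fmap_comp, LinearMap.comp_apply, hα, map_smul]
  simp only [scaleAction_apply] at hw
  rwa [← LinearMap.comp_apply, ← Fmap_comp, ← LinearMap.comp_apply, ← Fmap_comp,
    scaleHomP_comp_cofaceP_castSucc, scaleHomP_comp_cofaceP_succ] at hw

theorem Fmap_scaleHomP_of_mem_HsubP (n : ℕ) {α : FF k (Lp k n)} (hα : α ∈ HsubP k n)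
    (j : Fin n) (t : k) : Fmap (scaleHomP k n j t) α = t • α := by
  have h := (Submodule.mem_iInf _).mp ((Submodule.mem_iInf _).mp (Submodule.mem_inf.mp hα).1 j) t
  rwa [LinearMap.mem_ker, LinearMap.sub_apply, LinearMap.smul_apply, LinearMap.id_apply,
    sub_eq_zero] at h

end Coface

theorem sum_neg_one_pow_smul_add_eq_zero {R M : Type*} [Ring R] [AddCommGroup M] [Module R M]
    (n : ℕ) (G : Fin (n + 1) → M) :
    G 0 + (∑ j : Fin n, (-1 : R) ^ ((j : ℕ) + 1) • (G j.castSucc + G j.succ) +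
      (-1 : R) ^ (n + 1) • G (Fin.last n)) = 0 := by
  have h₁ := Fin.sum_univ_succ fun p : Fin (n + 1) => (-1 : R) ^ (p : ℕ) • G p
  have h₂ := Fin.sum_univ_castSucc fun p : Fin (n + 1) => (-1 : R) ^ (p : ℕ) • G p
  simp only [Fin.val_zero, pow_zero, one_smul, Fin.val_succ, Fin.val_castSucc, Fin.val_last,
    pow_succ, mul_neg_one, neg_smul, Finset.sum_neg_distrib] at h₁ h₂
  have h := eq_add_neg_iff_add_eq.mp (h₂.symm.trans h₁)
  simp only [smul_add, Finset.sum_add_distrib, pow_succ, mul_neg_one, neg_smul,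
    Finset.sum_neg_distrib]
  rw [← h]
  abel

/-- every element `α ∈ H'_n ⊆ F'_n` (multilinear in `x_1,…,x_n` and
alternating under their permutations) satisfies `δ α = 0` in `F'_{n+1}`. -/
theorem statement_6 (k : Type*) [Field k] [CharZero k] (n : ℕ)
    (α : FF k (Lp k n)) (hα : α ∈ HsubP k n) :
    cosimpP k n α = 0 := by
  rw [cosimpP, LinearMap.sum_apply, Fin.sum_univ_succ, Fin.sum_univ_castSucc]
  simp only [LinearMap.smul_apply, Fin.succ_last, cofaceP_zero, cofaceP_last, Fin.val_zero,
    pow_zero, one_smul, Fin.val_succ, Fin.val_castSucc, Fin.val_last,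
    Fmap_cofaceP_castSucc_succ n _ (Fmap_scaleHomP_of_mem_HsubP n hα _)]
  exact sum_neg_one_pow_smul_add_eq_zero n fun p => Fmap (skipHom k n p) α
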